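/- Let A be a k-linear abelian category over a field k with finite-dimensional Hom spaces, and let W and F be objects such that: (i) End(W) ≅ k; (ii) every nonzero morphism W → F is a monomorphism; and (iii) for every monomorphism ψ : W → F, one has Hom(W, coker(ψ)) = 0. Then dim_k Hom(W, F) ≤ 1. -/

import Mathlib

open CategoryTheory CategoryTheory.Limits

/-! A morphism `f : W ⟶ F` killed by the cokernel of a monomorphism `ψ : W ⟶ F` factors as
`g ≫ ψ` with `g ∈ End W = k`, so `f` is a multiple of `ψ`. By (ii) any nonzero `ψ` is a
monomorphism and by (iii) every `f` is killed by its cokernel, so `ψ` spans `Hom(W, F)`. -/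

theorem CategoryTheory.Abelian.exists_smul_eq_of_comp_cokernel_π_eq_zero {C : Type*}
    [Category C] [Abelian C] {k : Type*} [Semiring k] [Linear k C] {W F : C}
    (hW : ∀ φ : W ⟶ W, ∃ c : k, φ = c • 𝟙 W) (ψ : W ⟶ F) [Mono ψ] (f : W ⟶ F)
    (hf : f ≫ cokernel.π ψ = 0) : ∃ c : k, c • ψ = f := by
  obtain ⟨c, hc⟩ := hW (Abelian.monoLift ψ f hf)
  refine ⟨c, ?_⟩
  rw [← Abelian.monoLift_comp ψ f hf, hc, Linear.smul_comp, Category.id_comp]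

/-- Let `A` be a `k`-linear abelian category over a field `k` with finite-dimensional
Hom spaces, and let `W` and `F` be objects such that: (i) `End(W) ≅ k`; (ii) every
nonzero morphism `W → F` is a monomorphism; and (iii) for every monomorphism
`ψ : W → F`, one has `Hom(W, coker(ψ)) = 0`.  Then `dim_k Hom(W, F) ≤ 1`. -/
theorem stmt13 {C : Type*} [Category C] [Abelian C]
    (k : Type*) [Field k] [Linear k C]
    [∀ X Y : C, FiniteDimensional k (X ⟶ Y)]
    (W F : C)
    (h1 : ∀ φ : W ⟶ W, ∃ c : k, φ = c • 𝟙 W)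
    (h2 : ∀ f : W ⟶ F, f ≠ 0 → Mono f)
    (h3 : ∀ ψ : W ⟶ F, Mono ψ → ∀ g : W ⟶ cokernel ψ, g = 0) :
    Module.finrank k (W ⟶ F) ≤ 1 := by
  by_cases hF : ∀ f : W ⟶ F, f = 0
  · exact finrank_le_one 0 fun f => ⟨0, by rw [smul_zero, hF f]⟩
  · obtain ⟨ψ, hψ⟩ := not_forall.mp hF
    have := h2 ψ hψ
    exact finrank_le_one ψ fun f =>
      Abelian.exists_smul_eq_of_comp_cokernel_π_eq_zero h1 ψ f (h3 ψ this _)
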